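/- arXiv:1003.3915 — 4 statements merged into one kernel-verified Lean document; each statement's English description precedes it below -/
import Mathlib

section
/- For every p, k, and w, there exists f_w(p,k) such that every graph G of tree-width less than w either contains k vertex-disjoint subgraphs each having a K_p minor, or there is a set X of at most f_w(p,k) vertices such that G - X has no K_p minor. -/
open SimpleGraph

section Defs
variable {V : Type*}

/-- `G` has a `K_p` minor: `p` disjoint nonempty connected branch sets pairwise joined by edges. -/
def HasCliqueMinor (G : SimpleGraph V) (p : ℕ) : Prop :=
  ∃ B : Fin p → Set V,
    (∀ i, (B i).Nonempty) ∧
    (∀ i, (G.induce (B i)).Connected) ∧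
    (Pairwise fun i j => Disjoint (B i) (B j)) ∧
    (Pairwise fun i j => ∃ u ∈ B i, ∃ v ∈ B j, G.Adj u v)

/-- `G` contains `k` pairwise vertex-disjoint instances of a `K_p` minor. -/
def HasDisjointCliqueMinors (G : SimpleGraph V) (p k : ℕ) : Prop :=
  ∃ S : Fin k → Set V,
    (Pairwise fun i j => Disjoint (S i) (S j)) ∧
    ∀ i, HasCliqueMinor (G.induce (S i)) p

/-- `H` is a minor of `G` (branch-set / minor-model definition). -/
def HasMinor {W : Type*} (G : SimpleGraph V) (H : SimpleGraph W) : Prop :=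
  ∃ B : W → Set V,
    (∀ w, (B w).Nonempty) ∧
    (∀ w, (G.induce (B w)).Connected) ∧
    (Pairwise fun w w' => Disjoint (B w) (B w')) ∧
    (∀ w w', H.Adj w w' → ∃ u ∈ B w, ∃ v ∈ B w', G.Adj u v)

/-- `(Gt, W)` is a tree decomposition of `G`. -/
def IsTreeDecomp {T : Type*} (G : SimpleGraph V) (Gt : SimpleGraph T) (W : T → Set V) : Prop :=
  Gt.IsTree ∧
  (∀ v : V, ∃ t, v ∈ W t) ∧
  (∀ u v : V, G.Adj u v → ∃ t, u ∈ W t ∧ v ∈ W t) ∧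
  (∀ v : V, (Gt.induce {t | v ∈ W t}).Connected)

/-- `G` has tree-width `< w`, i.e. a tree decomposition with all bags of size `≤ w`. -/
def TreewidthLt (G : SimpleGraph V) (w : ℕ) : Prop :=
  ∃ (T : Type) (Gt : SimpleGraph T) (W : T → Set V),
    IsTreeDecomp G Gt W ∧ ∀ t, (W t).Finite ∧ (W t).ncard ≤ w

/-- `G` has path-width at most `w`. -/
def PathwidthLe (G : SimpleGraph V) (w : ℕ) : Prop :=
  ∃ (n : ℕ) (W : Fin (n+1) → Set V),
    (∀ v, ∃ i, v ∈ W i) ∧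
    (∀ u v, G.Adj u v → ∃ i, u ∈ W i ∧ v ∈ W i) ∧
    (∀ v (i j k : Fin (n+1)), i ≤ j → j ≤ k → v ∈ W i → v ∈ W k → v ∈ W j) ∧
    (∀ i, (W i).Finite ∧ (W i).ncard ≤ w + 1)

/-- An `X`–`Y` linkage of order `t` in `G`: `t` disjoint `X`–`Y` paths meeting all of `X ∪ Y`. -/
structure Linkage (G : SimpleGraph V) (X Y : Set V) (t : ℕ) where
  first : Fin t → V
  last : Fin t → V
  walk : ∀ i, G.Walk (first i) (last i)
  isPath : ∀ i, (walk i).IsPath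
  firstMem : ∀ i, first i ∈ X
  lastMem : ∀ i, last i ∈ Y
  innerCond : ∀ i v, v ∈ (walk i).support → v ∈ X ∪ Y → v = first i ∨ v = last i
  disjointCond : ∀ i j, i ≠ j → ∀ v, v ∈ (walk i).support → v ∉ (walk j).support
  coverX : ∀ x ∈ X, ∃ i, first i = x
  coverY : ∀ y ∈ Y, ∃ i, last i = y

/-- The collection of vertex sets of the paths of a linkage. -/
def Linkage.pathSets {G : SimpleGraph V} {X Y : Set V} {t : ℕ} (L : Linkage G X Y t) :
    Set (Set V) := {s | ∃ i, s = {v | v ∈ (L.walk i).support}}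

/-- A linkage is singular if it covers all of `V(G)` and `G` has no other `X`–`Y` linkage. -/
def Linkage.Singular {G : SimpleGraph V} {X Y : Set V} {t : ℕ} (L : Linkage G X Y t) : Prop :=
  (∀ v : V, ∃ i, v ∈ (L.walk i).support) ∧
  ∀ (t' : ℕ) (L' : Linkage G X Y t'), L'.pathSets = L.pathSets

/-- A cycle in `G`. -/
structure CycleIn (G : SimpleGraph V) where
  base : V
  walk : G.Walk base base
  isCycle : walk.IsCycle

def CycleIn.verts {G : SimpleGraph V} (C : CycleIn G) : Set V := {v | v ∈ C.walk.support}

/-- Concentric cycles: pairwise disjoint, and each middle cycle separates inner from outer. -/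
def Concentric {G : SimpleGraph V} {s : ℕ} (C : Fin s → CycleIn G) : Prop :=
  (Pairwise fun i j => Disjoint (C i).verts (C j).verts) ∧
  ∀ (i j k : Fin s), i < j → j < k →
    ∀ (u v : V), u ∈ (C i).verts → v ∈ (C k).verts →
      ∀ w : G.Walk u v, ∃ x ∈ (C j).verts, x ∈ w.support

/-- A walk is orthogonal to the (vertex sets of) cycles `D 1, …, D s`: it meets each `D i` in a
nonempty contiguous segment, and these segments appear in order (or in reverse order). -/
def WalkOrthS {G : SimpleGraph V} {x y : V} (w : G.Walk x y) {s : ℕ}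
    (D : Fin s → Set V) : Prop :=
  ∃ a b : Fin s → ℕ,
    (∀ i, a i ≤ b i) ∧ (∀ i, b i < w.support.length) ∧
    ((∀ i j : Fin s, i < j → b i < a j) ∨ (∀ i j : Fin s, i < j → b j < a i)) ∧
    (∀ (i : Fin s) (n : ℕ) (hn : n < w.support.length),
      w.support.get ⟨n, hn⟩ ∈ D i ↔ (a i ≤ n ∧ n ≤ b i))

/-- `v` is the first vertex of the list `l` lying in `S`. -/
def firstIn (l : List V) (S : Set V) (v : V) : Prop :=
  ∃ l₁ l₂, l = l₁ ++ v :: l₂ ∧ v ∈ S ∧ ∀ u ∈ l₁, u ∉ S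

/-- An `A`–`L` comb (`A` playing the role of the vertex set of the subgraph `H`): disjoint paths
starting in `A` (with no further vertex in `A`) and ending on `⋃ L`, such that the set of
endvertices of the `(Q,H)`-segments of the paths of `L` equals the set of last vertices. -/
structure Comb {G : SimpleGraph V} {X Y : Set V} {t : ℕ}
    (A : Set V) (L : Linkage G X Y t) (m : ℕ) where
  first : Fin m → V
  last : Fin m → V
  walk : ∀ i, G.Walk (first i) (last i)
  isPath : ∀ i, (walk i).IsPath
  firstMem : ∀ i, first i ∈ A
  onlyFirstInA : ∀ i v, v ∈ (walk i).support → v ∈ A → v = first i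
  endsOnL : ∀ i, ∃ j, last i ∈ (L.walk j).support
  disjointCond : ∀ i j, i ≠ j → ∀ v, v ∈ (walk i).support → v ∉ (walk j).support
  combCond :
    {v | ∃ j, firstIn ((L.walk j).support) ((⋃ i, {u | u ∈ (walk i).support}) ∪ A) v ∨
          firstIn ((L.walk j).support).reverse ((⋃ i, {u | u ∈ (walk i).support}) ∪ A) v}
      = Set.range last

/-- `G` is `m`-connected. -/
def IsKConnected (G : SimpleGraph V) (m : ℕ) : Prop :=
  m < Nat.card V ∧ ∀ S : Set V, S.Finite → S.ncard < m → (G.induce Sᶜ).Connected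

end Defs

section Fans

/-- Adjacency of the fan `F(l,n)`: the ladder `L(l)` on the `u`- and `v`-paths together with
`n` independent vertices joined to all of the `v`-path. -/
def fanAdj (l n : ℕ) : (Fin l ⊕ (Fin l ⊕ Fin n)) → (Fin l ⊕ (Fin l ⊕ Fin n)) → Prop
  | Sum.inl i, Sum.inl j => i.val + 1 = j.val
  | Sum.inl i, Sum.inr (Sum.inl j) => i = j
  | Sum.inr (Sum.inl i), Sum.inr (Sum.inl j) => i.val + 1 = j.val
  | Sum.inr (Sum.inl _), Sum.inr (Sum.inr _) => True
  | _, _ => False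

/-- The fan `F(l, n)`. -/
def fanGraph (l n : ℕ) : SimpleGraph (Fin l ⊕ (Fin l ⊕ Fin n)) :=
  SimpleGraph.fromRel (fanAdj l n)

/-- The `n × n` grid graph. -/
def gridGraph (n : ℕ) : SimpleGraph (Fin n × Fin n) :=
  SimpleGraph.fromRel (fun a b =>
    (a.1 = b.1 ∧ a.2.val + 1 = b.2.val) ∨ (a.2 = b.2 ∧ a.1.val + 1 = b.1.val))

end Fans

section Embed
variable {V : Type*} [Fintype V] [DecidableEq V]

/-- Reversal of darts, as a permutation. -/
def dartRev (G : SimpleGraph V) : Equiv.Perm G.Dart :=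
  ⟨SimpleGraph.Dart.symm, SimpleGraph.Dart.symm,
    fun d => SimpleGraph.Dart.symm_symm d, fun d => SimpleGraph.Dart.symm_symm d⟩

/-- The Euler characteristic of the (orientable) combinatorial embedding of `G` given by the
rotation system `ρ`: `n - e + f`, corrected so that all components live in one surface. -/
noncomputable def eulerChar (G : SimpleGraph V) [DecidableRel G.Adj]
    (ρ : Equiv.Perm G.Dart) : ℤ :=
  (Fintype.card V : ℤ) - (G.edgeFinset.card : ℤ)
    + (Nat.card (Quotient (MulAction.orbitRel
        (Subgroup.zpowers ((dartRev G).trans ρ)) G.Dart)) : ℤ)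
    - 2 * ((Nat.card G.ConnectedComponent : ℤ) - 1)

/-- `G` is embeddable in an (orientable) surface of Euler characteristic `χ`: it has a rotation
system (a permutation of the darts preserving tails) whose Euler characteristic is at least `χ`. -/
def EmbeddableEuler (G : SimpleGraph V) [DecidableRel G.Adj] (χ : ℤ) : Prop :=
  ∃ ρ : Equiv.Perm G.Dart, (∀ d : G.Dart, (ρ d).toProd.1 = d.toProd.1) ∧ χ ≤ eulerChar G ρ

end Embed

/-!
Fix a tree decomposition of width less than `w` and, for every vertex, a bag containing it.
A `K_p` minor can be shrunk to a finite connected one, and a finite connected vertex set spans a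
finite subtree of the decomposition tree all of whose bags meet it. Finite subtrees of a tree
have the Erdős–Pósa property with hitting sets of fewer than `k` nodes: root the tree and pick
a subtree whose top vertex is deepest; every subtree meeting it contains that top vertex, so
either recurse on the subtrees avoiding it or, if the tops have unbounded depth, add a subtree
lying entirely below the ones already chosen. Disjoint subtrees yield disjoint minors, and the
bags of a hitting set, at most `(k - 1) * w` vertices, meet every `K_p` minor.
-/

lemma exists_fin_succ_pairwise_disjoint {α : Type*} {F : Set (Set α)} {k : ℕ} {g : Fin k → Set α}
    (hg : ∀ i, g i ∈ F) (hgd : Pairwise fun i j => Disjoint (g i) (g j)) {C : Set α} (hC : C ∈ F)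
    (hCg : ∀ i, Disjoint C (g i)) :
    ∃ g' : Fin (k + 1) → Set α, (∀ i, g' i ∈ F) ∧ Pairwise fun i j => Disjoint (g' i) (g' j) := by
  refine ⟨Fin.cons C g, Fin.cases hC hg, fun i j hij => ?_⟩
  cases i using Fin.cases <;> cases j using Fin.cases
  · exact absurd rfl hij
  · exact hCg _
  · exact (hCg _).symm
  · exact hgd (fun h => hij (congrArg Fin.succ h))

namespace SimpleGraph

variable {V : Type*} {G : SimpleGraph V}

lemma Preconnected.exists_walk_support_subset {S : Set V} (hS : (G.induce S).Preconnected)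
    {u v : V} (hu : u ∈ S) (hv : v ∈ S) : ∃ w : G.Walk u v, ∀ x ∈ w.support, x ∈ S := by
  obtain ⟨w⟩ := hS ⟨u, hu⟩ ⟨v, hv⟩
  have hw : ∀ x ∈ (w.map (Embedding.induce S).toHom).support, x ∈ S := by
    intro x hx
    obtain ⟨y, -, rfl⟩ := List.mem_map.mp (Walk.support_map _ w ▸ hx)
    exact y.2
  exact ⟨_, hw⟩

lemma exists_finite_connected_of_subset {S F : Set V} (hS : (G.induce S).Connected)
    (hF : F.Finite) (hFS : F ⊆ S) :
    ∃ C, F ⊆ C ∧ C ⊆ S ∧ C.Finite ∧ (G.induce C).Connected := by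
  induction F, hF using Set.Finite.induction_on with
  | empty =>
    obtain ⟨⟨u, hu⟩⟩ := hS.nonempty
    refine ⟨{u}, Set.empty_subset _, Set.singleton_subset_iff.mpr hu, Set.finite_singleton u, ?_⟩
    rw [induce_singleton_eq_top]
    exact connected_top
  | @insert a F _ _ ih =>
    obtain ⟨C, hFC, hCS, hCfin, hC⟩ := ih ((Set.subset_insert a F).trans hFS)
    obtain ⟨⟨c, hc⟩⟩ := hC.nonempty
    obtain ⟨w, hw⟩ :=
      hS.preconnected.exists_walk_support_subset (hCS hc) (hFS (Set.mem_insert a F))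
    refine ⟨C ∪ {x | x ∈ w.support},
      Set.insert_subset (Or.inr w.end_mem_support) (hFC.trans Set.subset_union_left),
      Set.union_subset hCS hw, hCfin.union w.support.finite_toSet,
      induce_union_connected hC.preconnected w.connected_induce_support.preconnected
        ⟨c, hc, w.start_mem_support⟩⟩

lemma Walk.dist_lt_or_eq_of_mem_support {r t v : V} {P : G.Walk r t}
    (hP : P.length = G.dist r t) (hv : v ∈ P.support) : G.dist r v < G.dist r t ∨ v = t := by
  classical
  refine or_iff_not_imp_right.mpr fun hvt => ?_
  calc G.dist r v ≤ (P.takeUntil v hv).length := dist_le _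
    _ < P.length := Walk.length_takeUntil_lt_length hv hvt
    _ = G.dist r t := hP

lemma Reachable.exists_isPath_append {r t x : V} {S : Set V} (hr : G.Reachable r t)
    (hS : (G.induce S).Connected) (ht : t ∈ S) (hmin : ∀ v ∈ S, G.dist r t ≤ G.dist r v)
    (hx : x ∈ S) :
    ∃ (P : G.Walk r t) (Q : G.Walk t x), (P.append Q).IsPath ∧ P.length = G.dist r t ∧
      ∀ v ∈ Q.support, v ∈ S := by
  classical
  obtain ⟨P, hP, hPlen⟩ := hr.exists_path_of_dist
  obtain ⟨Q₀, hQ₀⟩ := hS.preconnected.exists_walk_support_subset ht hx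
  have hQ : Q₀.bypass.IsPath := Q₀.bypass_isPath
  have hQS : ∀ v ∈ Q₀.bypass.support, v ∈ S :=
    fun v hv => hQ₀ v (Q₀.support_bypass_subset_support hv)
  refine ⟨P, Q₀.bypass, ?_, hPlen, hQS⟩
  have hQnodup := hQ.support_nodup
  rw [← Walk.cons_tail_support, List.nodup_cons] at hQnodup
  rw [Walk.isPath_def, Walk.support_append, List.nodup_append]
  refine ⟨hP.support_nodup, hQnodup.2, fun a ha b hb hab => ?_⟩
  subst hab
  rcases Walk.dist_lt_or_eq_of_mem_support hPlen ha with hlt | rfl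
  · exact (hmin a (hQS a (List.mem_of_mem_tail hb))).not_gt hlt
  · exact hQnodup.1 hb

lemma IsTree.top_mem_of_dist_le {r t₁ t₂ x : V} {S₁ S₂ : Set V} (hT : G.IsTree)
    (hS₁ : (G.induce S₁).Connected) (hS₂ : (G.induce S₂).Connected) (ht₁ : t₁ ∈ S₁)
    (ht₂ : t₂ ∈ S₂) (hmin₁ : ∀ v ∈ S₁, G.dist r t₁ ≤ G.dist r v)
    (hmin₂ : ∀ v ∈ S₂, G.dist r t₂ ≤ G.dist r v) (hx₁ : x ∈ S₁) (hx₂ : x ∈ S₂)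
    (hle : G.dist r t₂ ≤ G.dist r t₁) : t₁ ∈ S₂ := by
  obtain ⟨P₁, Q₁, hPQ₁, -, -⟩ :=
    (hT.connected.preconnected r t₁).exists_isPath_append hS₁ ht₁ hmin₁ hx₁
  obtain ⟨P₂, Q₂, hPQ₂, hP₂len, hQ₂⟩ :=
    (hT.connected.preconnected r t₂).exists_isPath_append hS₂ ht₂ hmin₂ hx₂
  -- `t₁` lies on the unique `r`–`x` path, which runs through `t₂` and then stays inside `S₂`
  have ht₁mem : t₁ ∈ (P₂.append Q₂).support := by
    rw [← (hT.existsUnique_path r x).unique hPQ₁ hPQ₂]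
    exact (Walk.mem_support_append_iff _ _).mpr (Or.inl P₁.end_mem_support)
  rcases (Walk.mem_support_append_iff _ _).mp ht₁mem with hP | hQ
  · rcases Walk.dist_lt_or_eq_of_mem_support hP₂len hP with hlt | rfl
    exacts [absurd hle hlt.not_ge, ht₂]
  · exact hQ₂ t₁ hQ

theorem IsTree.exists_pairwise_disjoint_or_exists_hitting (hT : G.IsTree) (k : ℕ)
    (F : Set (Set V)) (hF : ∀ C ∈ F, C.Finite ∧ (G.induce C).Connected) :
    (∃ g : Fin k → Set V, (∀ i, g i ∈ F) ∧ Pairwise fun i j => Disjoint (g i) (g j)) ∨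
      ∃ N : Finset V, N.card < k ∧ ∀ C ∈ F, ∃ t ∈ N, t ∈ C := by
  classical
  induction k generalizing F with
  | zero => exact Or.inl ⟨Fin.elim0, fun i => i.elim0, fun i => i.elim0⟩
  | succ k ih =>
    obtain ⟨r⟩ := hT.connected.nonempty
    choose top htop hmin using fun C : F =>
      Set.exists_min_image C (G.dist r) (hF C C.2).1
        (Set.nonempty_coe_sort.mp (hF C C.2).2.nonempty)
    let depth (C : F) : ℕ := G.dist r (top C)
    by_cases hbdd : BddAbove (Set.range depth)
    · rcases isEmpty_or_nonempty F with hF₀ | hF₀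
      · exact Or.inr ⟨∅, Nat.zero_lt_succ k, fun C hC => isEmptyElim (⟨C, hC⟩ : F)⟩
      obtain ⟨C₁, hC₁⟩ := Nat.sSup_mem (Set.range_nonempty depth) hbdd
      have hdeepest : ∀ C, depth C ≤ depth C₁ := fun C => hC₁ ▸ le_csSup hbdd ⟨C, rfl⟩
      have hmeet : ∀ C : F, ¬ Disjoint (C₁ : Set V) C → top C₁ ∈ (C : Set V) := by
        intro C hC
        obtain ⟨x, hx₁, hx⟩ := Set.not_disjoint_iff.mp hC
        exact hT.top_mem_of_dist_le (hF C₁ C₁.2).2 (hF C C.2).2 (htop C₁) (htop C) (hmin C₁)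
          (hmin C) hx₁ hx (hdeepest C)
      rcases ih {C ∈ F | top C₁ ∉ C} (fun C hC => hF C hC.1) with ⟨g, hgF, hgd⟩ | ⟨N, hN, hNF⟩
      · refine Or.inl (exists_fin_succ_pairwise_disjoint (fun i => (hgF i).1) hgd C₁.2
          fun i => ?_)
        by_contra h
        exact (hgF i).2 (hmeet ⟨g i, (hgF i).1⟩ h)
      · refine Or.inr ⟨insert (top C₁) N, (Finset.card_insert_le _ _).trans_lt (by omega),
          fun C hC => ?_⟩
        by_cases h : top C₁ ∈ C
        · exact ⟨top C₁, Finset.mem_insert_self _ _, h⟩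
        · obtain ⟨t, htN, htC⟩ := hNF C ⟨hC, h⟩
          exact ⟨t, Finset.mem_insert_of_mem htN, htC⟩
    · rcases ih F hF with ⟨g, hgF, hgd⟩ | ⟨N, hN, hNF⟩
      · obtain ⟨Bd, hBd⟩ : BddAbove (G.dist r '' ⋃ i, g i) :=
          ((Set.finite_iUnion fun i => (hF _ (hgF i)).1).image _).bddAbove
        obtain ⟨_, ⟨C, rfl⟩, hC⟩ := not_bddAbove_iff.mp hbdd Bd
        refine Or.inl (exists_fin_succ_pairwise_disjoint hgF hgd C.2 fun i => ?_)
        refine Set.disjoint_left.mpr fun x hxC hxg => ?_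
        have hx : G.dist r x ≤ Bd := hBd ⟨x, Set.mem_iUnion_of_mem i hxg, rfl⟩
        exact (hmin C x hxC).not_gt (hx.trans_lt hC)
      · exact Or.inr ⟨N, by omega, hNF⟩

end SimpleGraph

section CliqueModel

variable {V ι : Type*} {G : SimpleGraph V}

def IsCliqueModel (G : SimpleGraph V) (B : ι → Set V) : Prop :=
  (∀ i, (B i).Nonempty) ∧
    (∀ i, (G.induce (B i)).Connected) ∧
    (Pairwise fun i j => Disjoint (B i) (B j)) ∧
    (Pairwise fun i j => ∃ u ∈ B i, ∃ v ∈ B j, G.Adj u v)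

lemma hasCliqueMinor_iff_exists_isCliqueModel {p : ℕ} :
    HasCliqueMinor G p ↔ ∃ B : Fin p → Set V, IsCliqueModel G B :=
  Iff.rfl

noncomputable def SimpleGraph.induceInduceIso (G : SimpleGraph V) (S : Set V) (A : Set S) :
    (G.induce S).induce A ≃g G.induce (Subtype.val '' A) where
  toEquiv := Equiv.Set.image Subtype.val A Subtype.val_injective
  map_rel_iff' := Iff.rfl

lemma IsCliqueModel.image_val {S : Set V} {B : ι → Set S} (h : IsCliqueModel (G.induce S) B) :
    IsCliqueModel G fun i => Subtype.val '' B i := by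
  obtain ⟨hne, hconn, hdisj, hadj⟩ := h
  refine ⟨fun i => (hne i).image _,
    fun i => (G.induceInduceIso S (B i)).connected_iff.mp (hconn i),
    fun i j hij => (Set.disjoint_image_iff Subtype.val_injective).mpr (hdisj hij),
    fun i j hij => ?_⟩
  obtain ⟨u, hu, v, hv, huv⟩ := hadj hij
  exact ⟨u, ⟨u, hu, rfl⟩, v, ⟨v, hv, rfl⟩, huv⟩

lemma IsCliqueModel.preimage_val {S : Set V} {B : ι → Set V} (h : IsCliqueModel G B)
    (hBS : ∀ i, B i ⊆ S) : IsCliqueModel (G.induce S) fun i => Subtype.val ⁻¹' B i := by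
  obtain ⟨hne, hconn, hdisj, hadj⟩ := h
  have himage : ∀ i, Subtype.val '' (Subtype.val ⁻¹' B i : Set S) = B i := fun i => by
    rw [Subtype.image_preimage_coe, Set.inter_eq_right.mpr (hBS i)]
  refine ⟨fun i => ?_, fun i => ?_, fun i j hij => (hdisj hij).preimage _, fun i j hij => ?_⟩
  · obtain ⟨x, hx⟩ := hne i
    exact ⟨⟨x, hBS i hx⟩, hx⟩
  · refine (G.induceInduceIso S _).connected_iff.mpr ?_
    rw [himage]
    exact hconn i
  · obtain ⟨u, hu, v, hv, huv⟩ := hadj hij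
    exact ⟨⟨u, hBS i hu⟩, hu, ⟨v, hBS j hv⟩, hv, huv⟩

lemma IsCliqueModel.connected_induce_iUnion [Nonempty ι] {B : ι → Set V}
    (h : IsCliqueModel G B) : (G.induce (⋃ i, B i)).Connected := by
  obtain ⟨hne, hconn, -, hadj⟩ := h
  let i₀ : ι := Classical.arbitrary ι
  obtain ⟨u, hu⟩ := hne i₀
  refine G.induce_connected_of_patches u (Set.mem_iUnion_of_mem i₀ hu) fun {v} hv => ?_
  obtain ⟨j, hvj⟩ := Set.mem_iUnion.mp hv
  have hpatch : (G.induce (B i₀ ∪ B j)).Connected := by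
    by_cases hj : i₀ = j
    · rw [hj, Set.union_self]
      exact hconn j
    · obtain ⟨a, ha, b, hb, hab⟩ := hadj hj
      exact G.connected_induce_union (hconn i₀).preconnected (hconn j).preconnected ha hb hab
  exact ⟨_, Set.union_subset (Set.subset_iUnion B i₀) (Set.subset_iUnion B j), Or.inl hu,
    Or.inr hvj, hpatch.preconnected _ _⟩

lemma IsCliqueModel.exists_finite [Finite ι] {B : ι → Set V} (h : IsCliqueModel G B) :
    ∃ D : ι → Set V, (∀ i, D i ⊆ B i) ∧ (∀ i, (D i).Finite) ∧ IsCliqueModel G D := by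
  obtain ⟨-, hconn, hdisj, hadj⟩ := h
  choose a ha b hb hab using fun (i j : ι) (hij : i ≠ j) => hadj hij
  let ends (i : ι) : Set V :=
    Set.range (fun j : {j // i ≠ j} => a i j j.2) ∪ Set.range (fun j : {j // j ≠ i} => b j i j.2)
  have hends : ∀ i, ends i ⊆ B i := by
    rintro i _ (⟨j, rfl⟩ | ⟨j, rfl⟩)
    exacts [ha i j j.2, hb j i j.2]
  choose D hendsD hDB hDfin hDconn using fun i =>
    SimpleGraph.exists_finite_connected_of_subset (hconn i) ((Set.finite_range _).union
      (Set.finite_range _)) (hends i)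
  refine ⟨D, hDB, hDfin, fun i => Set.nonempty_coe_sort.mp (hDconn i).nonempty, hDconn,
    fun i j hij => (hdisj hij).mono (hDB i) (hDB j), fun i j hij => ?_⟩
  exact ⟨a i j hij, hendsD i (Or.inl ⟨⟨j, hij⟩, rfl⟩), b i j hij,
    hendsD j (Or.inr ⟨⟨i, hij⟩, rfl⟩), hab i j hij⟩

lemma HasCliqueMinor.exists_finite_connected {S : Set V} {p : ℕ} (hp : 0 < p)
    (h : HasCliqueMinor (G.induce S) p) :
    ∃ A ⊆ S, A.Finite ∧ (G.induce A).Connected ∧ HasCliqueMinor (G.induce A) p := by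
  obtain ⟨B, hB⟩ := hasCliqueMinor_iff_exists_isCliqueModel.mp h
  obtain ⟨D, hDB, hDfin, hD⟩ := hB.image_val.exists_finite
  have : Nonempty (Fin p) := ⟨⟨0, hp⟩⟩
  refine ⟨⋃ i, D i, Set.iUnion_subset fun i => (hDB i).trans (Subtype.coe_image_subset S _),
    Set.finite_iUnion hDfin, hD.connected_induce_iUnion,
    hasCliqueMinor_iff_exists_isCliqueModel.mpr ⟨_, hD.preimage_val (Set.subset_iUnion D)⟩⟩

end CliqueModel

namespace IsTreeDecomp

variable {V T : Type*} {G : SimpleGraph V} {Gt : SimpleGraph T} {W : T → Set V}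

lemma connected_induce_bags_meeting (hW : IsTreeDecomp G Gt W) {A : Set V}
    (hA : (G.induce A).Connected) : (Gt.induce {t | (W t ∩ A).Nonempty}).Connected := by
  obtain ⟨-, hcover, hedge, hbags⟩ := hW
  let TA := {t | (W t ∩ A).Nonempty}
  have hreach_bag : ∀ v (hv : v ∈ A) {s s'} (hs : v ∈ W s) (hs' : v ∈ W s'),
      (Gt.induce TA).Reachable ⟨s, v, hs, hv⟩ ⟨s', v, hs', hv⟩ := by
    intro v hv s s' hs hs'
    have hsub : {t | v ∈ W t} ⊆ TA := fun t ht => ⟨v, ht, hv⟩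
    exact ((hbags v).preconnected ⟨s, hs⟩ ⟨s', hs'⟩).map (Gt.induceHomOfLE hsub).toHom
  have hreach : ∀ {x y : A} (_ : (G.induce A).Walk x y) {s s'} (hs : x.1 ∈ W s)
      (hs' : y.1 ∈ W s'),
      (Gt.induce TA).Reachable ⟨s, x, hs, x.2⟩ ⟨s', y, hs', y.2⟩ := by
    intro x y w
    induction w with
    | nil => exact fun hs hs' => hreach_bag _ (Subtype.prop _) hs hs'
    | @cons x z y hxz _ ih =>
      intro s s' hs hs'
      obtain ⟨m, hxm, hzm⟩ := hedge x z hxz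
      exact (hreach_bag x x.2 hs hxm).trans (ih hzm hs')
  obtain ⟨⟨v, hv⟩⟩ := hA.nonempty
  obtain ⟨t, ht⟩ := hcover v
  refine (SimpleGraph.connected_iff _).mpr ⟨fun ⟨s, x, hxs, hx⟩ ⟨s', y, hys', hy⟩ => ?_,
    ⟨⟨t, v, ht, hv⟩⟩⟩
  obtain ⟨w⟩ := hA.preconnected ⟨x, hx⟩ ⟨y, hy⟩
  exact hreach w hxs hys'

end IsTreeDecomp

lemma hasDisjointCliqueMinors_zero {V : Type*} (G : SimpleGraph V) (k : ℕ) :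
    HasDisjointCliqueMinors G 0 k :=
  ⟨fun _ => ∅, fun _ _ _ => Set.disjoint_empty _,
    fun _ => ⟨Fin.elim0, fun i => i.elim0, fun i => i.elim0, fun i => i.elim0, fun i => i.elim0⟩⟩

lemma Finset.set_ncard_biUnion_le_card_mul {ι α : Type*} (N : Finset ι) (s : ι → Set α) {w : ℕ}
    (hs : ∀ i, (s i).ncard ≤ w) : (⋃ i ∈ N, s i).ncard ≤ N.card * w :=
  (N.set_ncard_biUnion_le s).trans (by simpa using N.sum_le_card_nsmul _ w fun i _ => hs i)

theorem TreewidthLt.hasDisjointCliqueMinors_or_exists_hitting {V : Type*} {G : SimpleGraph V}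
    {p w : ℕ} (hG : TreewidthLt G w) (hp : 0 < p) (k : ℕ) :
    HasDisjointCliqueMinors G p k ∨
      ∃ X : Set V, X.Finite ∧ X.ncard ≤ (k - 1) * w ∧ ¬ HasCliqueMinor (G.induce Xᶜ) p := by
  obtain ⟨T, Gt, W, hW, hWsize⟩ := hG
  choose home hhome using hW.2.1
  let F : Set (Set T) := {C | C.Finite ∧ (Gt.induce C).Connected ∧
    ∃ A, HasCliqueMinor (G.induce A) p ∧ home '' A ⊆ C ∧ ∀ t ∈ C, (W t ∩ A).Nonempty}
  rcases hW.1.exists_pairwise_disjoint_or_exists_hitting k F fun C hC => ⟨hC.1, hC.2.1⟩ with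
    ⟨g, hgF, hgd⟩ | ⟨N, hN, hNF⟩
  · choose A hA hAg _ using fun i => (hgF i).2.2
    exact Or.inl ⟨A, fun i j hij => Set.disjoint_left.mpr fun v hvi hvj =>
      Set.disjoint_left.mp (hgd hij) (hAg i ⟨v, hvi, rfl⟩) (hAg j ⟨v, hvj, rfl⟩), hA⟩
  · refine Or.inr ⟨⋃ t ∈ N, W t, N.finite_toSet.biUnion fun t _ => (hWsize t).1, ?_,
      fun hX => ?_⟩
    · calc (⋃ t ∈ N, W t).ncard ≤ N.card * w :=
            N.set_ncard_biUnion_le_card_mul W fun t => (hWsize t).2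
        _ ≤ (k - 1) * w := Nat.mul_le_mul_right w (by omega)
    · obtain ⟨A, hAX, hAfin, hAconn, hA⟩ := hX.exists_finite_connected hp
      obtain ⟨C, hAC, hCbags, hCfin, hCconn⟩ :=
        SimpleGraph.exists_finite_connected_of_subset (hW.connected_induce_bags_meeting hAconn)
          (hAfin.image home) (by rintro _ ⟨v, hv, rfl⟩; exact ⟨v, hhome v, hv⟩)
      obtain ⟨t, htN, htC⟩ := hNF C ⟨hCfin, hCconn, A, hA, hAC, fun t ht => hCbags ht⟩
      obtain ⟨v, hvt, hvA⟩ := hCbags htC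
      exact hAX hvA (Set.mem_biUnion htN hvt)

/-- For every `p`, `k`, `w` there exists `f_w(p,k)` such that every graph of
tree-width `< w` either contains `k` disjoint `K_p` minors or has a set `X` of at most
`f_w(p,k)` vertices whose deletion kills all `K_p` minors. -/
theorem stmt0 (p k w : ℕ) :
    ∃ f : ℕ, ∀ (V : Type) (G : SimpleGraph V), TreewidthLt G w →
      HasDisjointCliqueMinors G p k ∨
      ∃ X : Set V, X.Finite ∧ X.ncard ≤ f ∧ ¬ HasCliqueMinor (G.induce Xᶜ) p := by
  refine ⟨(k - 1) * w, fun V G hG => ?_⟩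
  rcases Nat.eq_zero_or_pos p with rfl | hp
  · exact Or.inl (hasDisjointCliqueMinors_zero G k)
  · exact hG.hasDisjointCliqueMinors_or_exists_hitting hp k
end

section
/- The fan F(p, p-3) contains K_p as a minor. Consequently, for every k, the fan F(kp, k(p-3)) contains k vertex-disjoint instances of a K_p minor. -/
open SimpleGraph

lemma induce_connected_of_hub {V : Type*} {G : SimpleGraph V} {s : Set V} {h : V}
    (hh : h ∈ s) (hub : ∀ x ∈ s, x = h ∨ G.Adj h x) : (G.induce s).Connected := by
  rw [SimpleGraph.connected_iff]
  have key : ∀ x : s, (G.induce s).Reachable x ⟨h, hh⟩ := by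
    rintro ⟨x, hx⟩
    rcases hub x hx with rfl | hadj
    · exact SimpleGraph.Reachable.refl _
    · refine SimpleGraph.Adj.reachable ?_
      show G.Adj x h
      exact hadj.symm
  exact ⟨fun x y => (key x).trans (key y).symm, ⟨⟨h, hh⟩⟩⟩

def branchSet {V : Type*} (q : ℕ) (Uu Vv : Fin (q+3) → V) (Ww : Fin q → V)
    (i : Fin (q+3)) : Set V :=
  if h : i.val < q then {Vv i, Ww ⟨i.val, h⟩}
  else if i.val = q then {Vv i, Uu i}
  else if i.val = q+1 then {Vv i}
  else {Vv i, Uu i, Uu ⟨i.val - 1, by have := i.2; omega⟩}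

section BS
variable {V : Type*} {q : ℕ} (Uu Vv : Fin (q+3) → V) (Ww : Fin q → V) (i : Fin (q+3))

lemma bs_lt (h : i.val < q) : branchSet q Uu Vv Ww i = {Vv i, Ww ⟨i.val, h⟩} := by
  unfold branchSet; rw [dif_pos h]

lemma bs_q (h : i.val = q) : branchSet q Uu Vv Ww i = {Vv i, Uu i} := by
  unfold branchSet; rw [dif_neg (by omega), if_pos h]

lemma bs_q1 (h : i.val = q+1) : branchSet q Uu Vv Ww i = {Vv i} := by
  unfold branchSet; rw [dif_neg (by omega), if_neg (by omega), if_pos h]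

lemma bs_q2 (h : i.val = q+2) :
    branchSet q Uu Vv Ww i = {Vv i, Uu i, Uu ⟨i.val - 1, by omega⟩} := by
  unfold branchSet; rw [dif_neg (by omega), if_neg (by omega), if_neg (by omega)]

lemma vv_mem_branchSet : Vv i ∈ branchSet q Uu Vv Ww i := by
  unfold branchSet; split_ifs <;> simp

end BS

def ownerIdx (q : ℕ) : (Fin (q+3) ⊕ (Fin (q+3) ⊕ Fin q)) → ℕ
  | Sum.inl a => if a.val = q+1 then q+2 else a.val
  | Sum.inr (Sum.inl a) => a.val
  | Sum.inr (Sum.inr b) => b.val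

lemma fan_embed_cliqueMinor {V : Type*} (p : ℕ) (hp : 3 ≤ p) (G : SimpleGraph V)
    (f : (Fin p ⊕ (Fin p ⊕ Fin (p - 3))) → V) (hinj : Function.Injective f)
    (hadj : ∀ a b, (fanGraph p (p - 3)).Adj a b → G.Adj (f a) (f b)) :
    HasCliqueMinor G p := by
  obtain ⟨q, rfl⟩ : ∃ q, q + 3 = p := ⟨p - 3, Nat.sub_add_cancel hp⟩
  have hq3 : q + 3 - 3 = q := by omega
  set U : Fin (q+3) → V := fun a => f (Sum.inl a) with hU
  set Vv : Fin (q+3) → V := fun a => f (Sum.inr (Sum.inl a)) with hVv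
  set W : Fin q → V := fun b => f (Sum.inr (Sum.inr ⟨b.val, by omega⟩)) with hW
  have fanadj : ∀ a b, a ≠ b → fanAdj (q+3) (q+3-3) a b → G.Adj (f a) (f b) := by
    intro a b h1 h2
    exact hadj a b (by rw [fanGraph, SimpleGraph.fromRel_adj]; exact ⟨h1, Or.inl h2⟩)
  have hvv : ∀ a b : Fin (q+3), a.val + 1 = b.val → G.Adj (Vv a) (Vv b) := by
    intro a b h
    exact fanadj _ _ (by simp [Fin.ext_iff]; omega) h
  have huu : ∀ a b : Fin (q+3), a.val + 1 = b.val → G.Adj (U a) (U b) := by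
    intro a b h
    exact fanadj _ _ (by simp [Fin.ext_iff]; omega) h
  have huv : ∀ a : Fin (q+3), G.Adj (U a) (Vv a) := by
    intro a
    exact fanadj _ _ (by simp) rfl
  have hvw : ∀ (a : Fin (q+3)) (b : Fin q), G.Adj (Vv a) (W b) := by
    intro a b
    exact fanadj _ _ (by simp) trivial
  have hcase : ∀ m : Fin (q+3), m.val < q ∨ m.val = q ∨ m.val = q+1 ∨ m.val = q+2 := by
    intro m; have := m.2; omega
  refine ⟨branchSet q U Vv W, fun i => ⟨Vv i, vv_mem_branchSet U Vv W i⟩, ?conn, ?disj, ?adj⟩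
  case conn =>
    intro i
    rcases hcase i with h | h | h | h
    · rw [bs_lt U Vv W i h]
      refine induce_connected_of_hub (h := Vv i) (by simp) ?_
      intro x hx
      simp only [Set.mem_insert_iff, Set.mem_singleton_iff] at hx
      rcases hx with rfl | rfl
      · exact Or.inl rfl
      · exact Or.inr (hvw i ⟨i.val, h⟩)
    · rw [bs_q U Vv W i h]
      refine induce_connected_of_hub (h := Vv i) (by simp) ?_
      intro x hx
      simp only [Set.mem_insert_iff, Set.mem_singleton_iff] at hx
      rcases hx with rfl | rfl
      · exact Or.inl rfl
      · exact Or.inr (huv i).symm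
    · rw [bs_q1 U Vv W i h]
      refine induce_connected_of_hub (h := Vv i) (by simp) ?_
      intro x hx
      simp only [Set.mem_singleton_iff] at hx
      exact Or.inl hx
    · rw [bs_q2 U Vv W i h]
      refine induce_connected_of_hub (h := U i) (by simp) ?_
      intro x hx
      simp only [Set.mem_insert_iff, Set.mem_singleton_iff] at hx
      rcases hx with rfl | rfl | rfl
      · exact Or.inr (huv i)
      · exact Or.inl rfl
      · exact Or.inr (huu ⟨i.val - 1, by omega⟩ i (by simp; omega)).symm
  case disj =>
    have own : ∀ (i : Fin (q+3)) (x : V), x ∈ branchSet q U Vv W i →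
        ∃ z, f z = x ∧ ownerIdx q z = i.val := by
      intro i x hx
      rcases hcase i with h | h | h | h
      · rw [bs_lt U Vv W i h] at hx
        simp only [Set.mem_insert_iff, Set.mem_singleton_iff] at hx
        rcases hx with rfl | rfl
        · exact ⟨Sum.inr (Sum.inl i), rfl, rfl⟩
        · exact ⟨Sum.inr (Sum.inr ⟨i.val, by omega⟩), rfl, rfl⟩
      · rw [bs_q U Vv W i h] at hx
        simp only [Set.mem_insert_iff, Set.mem_singleton_iff] at hx
        rcases hx with rfl | rfl
        · exact ⟨Sum.inr (Sum.inl i), rfl, rfl⟩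
        · exact ⟨Sum.inl i, rfl, by simp only [ownerIdx]; rw [if_neg (by omega)]⟩
      · rw [bs_q1 U Vv W i h] at hx
        simp only [Set.mem_singleton_iff] at hx
        subst hx
        exact ⟨Sum.inr (Sum.inl i), rfl, rfl⟩
      · rw [bs_q2 U Vv W i h] at hx
        simp only [Set.mem_insert_iff, Set.mem_singleton_iff] at hx
        rcases hx with rfl | rfl | rfl
        · exact ⟨Sum.inr (Sum.inl i), rfl, rfl⟩
        · exact ⟨Sum.inl i, rfl, by simp only [ownerIdx]; rw [if_neg (by omega)]⟩
        · refine ⟨Sum.inl ⟨i.val - 1, by omega⟩, rfl, ?_⟩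
          simp only [ownerIdx]
          rw [if_pos (by simp; omega)]
          omega
    intro i j hij
    rw [Set.disjoint_left]
    intro x hxi hxj
    obtain ⟨z1, hz1, ho1⟩ := own i x hxi
    obtain ⟨z2, hz2, ho2⟩ := own j x hxj
    have hzz : z1 = z2 := hinj (hz1.trans hz2.symm)
    subst hzz
    exact hij (Fin.ext (ho1.symm.trans ho2))
  case adj =>
    have key : ∀ i j : Fin (q+3), i.val < j.val →
        ∃ u ∈ branchSet q U Vv W i, ∃ v ∈ branchSet q U Vv W j, G.Adj u v := by
      intro i j hlt
      have hi2 := i.2; have hj2 := j.2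
      by_cases hj : j.val < q
      · exact ⟨Vv i, vv_mem_branchSet U Vv W i, W ⟨j.val, hj⟩,
          by rw [bs_lt U Vv W j hj]; simp, hvw i ⟨j.val, hj⟩⟩
      · by_cases hi : i.val < q
        · exact ⟨W ⟨i.val, hi⟩, by rw [bs_lt U Vv W i hi]; simp, Vv j,
            vv_mem_branchSet U Vv W j, (hvw j ⟨i.val, hi⟩).symm⟩
        · by_cases hjq : j.val = q + 2
          · by_cases hiq : i.val = q
            · refine ⟨U i, by rw [bs_q U Vv W i hiq]; simp,
                U ⟨j.val - 1, by omega⟩, by rw [bs_q2 U Vv W j hjq]; simp, ?_⟩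
              exact huu _ _ (by simp; omega)
            · exact ⟨Vv i, vv_mem_branchSet U Vv W i, Vv j, vv_mem_branchSet U Vv W j,
                hvv i j (by omega)⟩
          · exact ⟨Vv i, vv_mem_branchSet U Vv W i, Vv j, vv_mem_branchSet U Vv W j,
              hvv i j (by omega)⟩
    intro i j hij
    rcases lt_or_gt_of_ne (fun h : i.val = j.val => hij (Fin.ext h)) with h | h
    · exact key i j h
    · obtain ⟨u, hu, v, hv, huv2⟩ := key j i h
      exact ⟨v, hv, u, hu, huv2.symm⟩

def blkOwner (p w k : ℕ) : (Fin (k*p) ⊕ (Fin (k*p) ⊕ Fin (k*w))) → ℕ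
  | Sum.inl a => a.val / p
  | Sum.inr (Sum.inl a) => a.val / p
  | Sum.inr (Sum.inr b) => b.val / w

def blockSet (p w k : ℕ) (i : Fin k) : Set (Fin (k*p) ⊕ (Fin (k*p) ⊕ Fin (k*w))) :=
  {x | blkOwner p w k x = i.val}

lemma blk_lt {p k a i : ℕ} (ha : a < p) (hi : i < k) : a + p * i < k * p := by
  calc a + p * i < p + p * i := by omega
    _ = p * (i + 1) := by ring
    _ ≤ p * k := Nat.mul_le_mul_left p hi
    _ = k * p := Nat.mul_comm p k


/-- The fan `F(p, p-3)` contains `K_p` as a minor; consequently, for every `k`, the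
fan `F(kp, k(p-3))` contains `k` vertex-disjoint instances of a `K_p` minor. -/
theorem stmt2 (p : ℕ) (hp : 3 ≤ p) :
    HasCliqueMinor (fanGraph p (p - 3)) p ∧
    ∀ k : ℕ, HasDisjointCliqueMinors (fanGraph (k * p) (k * (p - 3))) p k := by
  have hp0 : 0 < p := by omega
  constructor
  · exact fan_embed_cliqueMinor p hp _ id Function.injective_id (fun a b h => h)
  · intro k
    refine ⟨blockSet p (p-3) k, ?_, ?_⟩
    · intro i j hij
      rw [Set.disjoint_left]
      intro x hxi hxj
      exact hij (Fin.ext ((hxi.symm).trans hxj))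
    · intro i0
      have hdiv : ∀ a : Fin p, (a.val + p * i0.val) / p = i0.val := fun a => by
        rw [Nat.add_mul_div_left _ _ hp0, Nat.div_eq_of_lt a.2, Nat.zero_add]
      have hdiv3 : ∀ b : Fin (p-3), (b.val + (p-3) * i0.val) / (p-3) = i0.val := fun b => by
        have h3 : 0 < p - 3 := by have := b.2; omega
        rw [Nat.add_mul_div_left _ _ h3, Nat.div_eq_of_lt b.2, Nat.zero_add]
      let F : (Fin p ⊕ (Fin p ⊕ Fin (p-3))) → (blockSet p (p-3) k i0 : Set _) := fun z =>
        match z with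
        | Sum.inl a => ⟨Sum.inl ⟨a.val + p * i0.val, blk_lt a.2 i0.2⟩, hdiv a⟩
        | Sum.inr (Sum.inl a) => ⟨Sum.inr (Sum.inl ⟨a.val + p * i0.val, blk_lt a.2 i0.2⟩), hdiv a⟩
        | Sum.inr (Sum.inr b) => ⟨Sum.inr (Sum.inr ⟨b.val + (p-3) * i0.val, blk_lt b.2 i0.2⟩), hdiv3 b⟩
      have Finj : Function.Injective F := by
        intro z1 z2 hz
        have hz' : (F z1).val = (F z2).val := congrArg Subtype.val hz
        rcases z1 with a | a | b <;> rcases z2 with a' | a' | b' <;>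
          simp only [F, Sum.inl.injEq, Sum.inr.injEq, Fin.mk.injEq, Fin.ext_iff,
            reduceCtorEq] at hz' ⊢ <;> omega
      refine fan_embed_cliqueMinor p hp _ F Finj ?_
      intro a b hab
      rw [fanGraph, SimpleGraph.fromRel_adj] at hab
      obtain ⟨hne, hr⟩ := hab
      have hmap : ∀ z1 z2, fanAdj p (p-3) z1 z2 →
          fanAdj (k*p) (k*(p-3)) (F z1).val (F z2).val := by
        intro z1 z2 h
        rcases z1 with a1 | a1 | b1 <;> rcases z2 with a2 | a2 | b2
        · have h' : a1.val + 1 = a2.val := h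
          show a1.val + p * i0.val + 1 = a2.val + p * i0.val
          omega
        · have h' : a1 = a2 := h
          cases h'
          exact rfl
        · exact (h : False).elim
        · exact (h : False).elim
        · have h' : a1.val + 1 = a2.val := h
          show a1.val + p * i0.val + 1 = a2.val + p * i0.val
          omega
        · exact trivial
        · exact (h : False).elim
        · exact (h : False).elim
        · exact (h : False).elim
      show (fanGraph (k*p) (k*(p-3))).Adj (F a).val (F b).val
      rw [fanGraph, SimpleGraph.fromRel_adj]
      refine ⟨fun h => hne (Finj (Subtype.ext h)), ?_⟩
      rcases hr with h | h
      · exact Or.inl (hmap _ _ h)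
      · exact Or.inr (hmap _ _ h)
end

section
/- Let P be an X–Y linkage in a graph G and let H be a subgraph of G. If G contains t pairwise disjoint H–(X ∪ Y) paths, then G contains an H–P comb consisting of at least t paths. -/
open SimpleGraph

/-!
Call a family of disjoint paths, each starting in `A` with no further vertex in `A`, a precomb
if every last vertex is an end of a `(Q,A)`-segment of some path of `L`. The given paths form a
precomb, since their last vertices lie in `X ∪ Y` and so are ends of paths of `L`. A precomb is
a comb once every segment end `v` is a last vertex. Otherwise, if `v` lies on a tooth, cut that
tooth at `v`: the old last vertex (not in `A`) leaves the union of the teeth, and shrinking that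
union keeps the other last vertices segment ends. If `v` lies on no tooth then `v ∈ A`, and we
add the trivial tooth at `v`. The first move decreases the number of tooth vertices outside
`A`, the second keeps it and decreases the number of segment ends that are not last vertices,
so the process terminates, and it never decreases the number of teeth.
-/

section CombConstruction

variable {V : Type*} {G : SimpleGraph V} {X Y : Set V} {t : ℕ}

lemma firstIn.mem {l : List V} {S : Set V} {v : V} (h : firstIn l S v) : v ∈ l := by
  obtain ⟨l₁, l₂, rfl, -, -⟩ := h
  simp

lemma firstIn.mem_set {l : List V} {S : Set V} {v : V} (h : firstIn l S v) : v ∈ S := by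
  obtain ⟨-, -, -, hv, -⟩ := h
  exact hv

lemma firstIn.mono {l : List V} {S S' : Set V} {v : V} (h : firstIn l S v) (hv : v ∈ S')
    (hS : S' ⊆ S) : firstIn l S' v := by
  obtain ⟨l₁, l₂, rfl, -, h₁⟩ := h
  exact ⟨l₁, l₂, rfl, hv, fun u hu hu' => h₁ u hu (hS hu')⟩

lemma firstIn_cons {l : List V} {S : Set V} {v : V} (hv : v ∈ S) : firstIn (v :: l) S v :=
  ⟨[], l, rfl, hv, by simp⟩

/-- The endvertices of the maximal `U`-segments of the paths of `L`: on each path, the first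
and the last vertex lying in `U`. -/
def segmentEnds (L : Linkage G X Y t) (U : Set V) : Set V :=
  {v | ∃ j, firstIn (L.walk j).support U v ∨ firstIn (L.walk j).support.reverse U v}

namespace segmentEnds

variable {L : Linkage G X Y t} {U U' : Set V} {v : V}

lemma mem_set (h : v ∈ segmentEnds L U) : v ∈ U := by
  obtain ⟨j, h | h⟩ := h <;> exact h.mem_set

lemma mem_support (h : v ∈ segmentEnds L U) : ∃ j, v ∈ (L.walk j).support := by
  obtain ⟨j, h | h⟩ := h
  · exact ⟨j, h.mem⟩
  · exact ⟨j, List.mem_reverse.mp h.mem⟩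

lemma finite (L : Linkage G X Y t) (U : Set V) : (segmentEnds L U).Finite :=
  (Set.finite_iUnion fun j => (L.walk j).support.finite_toSet).subset fun _ hv =>
    Set.mem_iUnion.mpr (mem_support hv)

lemma anti (h : v ∈ segmentEnds L U) (hv : v ∈ U') (hU : U' ⊆ U) :
    v ∈ segmentEnds L U' := by
  obtain ⟨j, hj | hj⟩ := h
  exacts [⟨j, Or.inl (hj.mono hv hU)⟩, ⟨j, Or.inr (hj.mono hv hU)⟩]

lemma of_mem_union (hv : v ∈ X ∪ Y) (hU : v ∈ U) : v ∈ segmentEnds L U := by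
  rcases hv with hX | hY
  · obtain ⟨j, rfl⟩ := L.coverX v hX
    refine ⟨j, Or.inl ?_⟩
    rw [← Walk.cons_tail_support]
    exact firstIn_cons hU
  · obtain ⟨j, rfl⟩ := L.coverY v hY
    refine ⟨j, Or.inr ?_⟩
    rw [← Walk.support_reverse, ← Walk.cons_tail_support]
    exact firstIn_cons hU

end segmentEnds

/-- Bundled, so that walks with different endpoints fit into one family. -/
structure Tooth (G : SimpleGraph V) where
  first : V
  last : V
  walk : G.Walk first last

def Tooth.support {m : ℕ} (q : Fin m → Tooth G) : Set V :=
  ⋃ k, {u | u ∈ (q k).walk.support}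

lemma Tooth.mem_support {m : ℕ} {q : Fin m → Tooth G} {u : V} :
    u ∈ Tooth.support q ↔ ∃ k, u ∈ (q k).walk.support := by
  simp [Tooth.support]

/-- A family satisfying every condition of a comb except that the segment ends of `L` may
include vertices which are not ends of teeth. -/
structure PreComb (A : Set V) (L : Linkage G X Y t) (m : ℕ) where
  tooth : Fin m → Tooth G
  isPath : ∀ i, (tooth i).walk.IsPath
  firstMem : ∀ i, (tooth i).first ∈ A
  onlyFirstInA : ∀ i v, v ∈ (tooth i).walk.support → v ∈ A → v = (tooth i).first
  disjointCond :
    ∀ i j, i ≠ j → ∀ v, v ∈ (tooth i).walk.support → v ∉ (tooth j).walk.support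
  lastMem : ∀ i, (tooth i).last ∈ segmentEnds L (Tooth.support tooth ∪ A)

namespace PreComb

variable {A : Set V} {L : Linkage G X Y t} {m : ℕ} (P : PreComb A L m)

def ends : Set V := segmentEnds L (Tooth.support P.tooth ∪ A)

def lasts : Set V := Set.range fun i => (P.tooth i).last

def toComb (h : P.ends ⊆ P.lasts) : Comb A L m where
  first i := (P.tooth i).first
  last i := (P.tooth i).last
  walk i := (P.tooth i).walk
  isPath := P.isPath
  firstMem := P.firstMem
  onlyFirstInA := P.onlyFirstInA
  endsOnL i := segmentEnds.mem_support (P.lastMem i)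
  disjointCond := P.disjointCond
  combCond := h.antisymm (Set.range_subset_iff.mpr P.lastMem)

noncomputable def offACard : ℕ := (Tooth.support P.tooth \ A).ncard

noncomputable def unmatchedCard : ℕ := (P.ends \ P.lasts).ncard

section truncate

variable [DecidableEq V] (i : Fin m) {v : V} (hv : v ∈ (P.tooth i).walk.support)

def truncTooth : Fin m → Tooth G :=
  Function.update P.tooth i ⟨_, v, (P.tooth i).walk.takeUntil v hv⟩

lemma truncTooth_first (k : Fin m) : (P.truncTooth i hv k).first = (P.tooth k).first := by
  by_cases hk : k = i
  · subst hk; simp [truncTooth]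
  · simp [truncTooth, Function.update_of_ne hk]

lemma truncTooth_support_subset (k : Fin m) :
    (P.truncTooth i hv k).walk.support ⊆ (P.tooth k).walk.support := by
  by_cases hk : k = i
  · subst hk
    rw [truncTooth, Function.update_self]
    exact Walk.support_takeUntil_subset_support _ hv
  · rw [truncTooth, Function.update_of_ne hk]
    exact List.Subset.refl _

lemma truncTooth_isPath (k : Fin m) : (P.truncTooth i hv k).walk.IsPath := by
  by_cases hk : k = i
  · subst hk
    rw [truncTooth, Function.update_self]
    exact (P.isPath k).takeUntil hv
  · rw [truncTooth, Function.update_of_ne hk]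
    exact P.isPath k

lemma support_truncTooth_subset :
    Tooth.support (P.truncTooth i hv) ⊆ Tooth.support P.tooth := by
  intro u hu
  obtain ⟨k, hk⟩ := Tooth.mem_support.mp hu
  exact Tooth.mem_support.mpr ⟨k, P.truncTooth_support_subset i hv k hk⟩

def truncate (hvE : v ∈ P.ends) : PreComb A L m where
  tooth := P.truncTooth i hv
  isPath := P.truncTooth_isPath i hv
  firstMem k := P.truncTooth_first i hv k ▸ P.firstMem k
  onlyFirstInA k u hu huA :=
    P.truncTooth_first i hv k ▸ P.onlyFirstInA k u (P.truncTooth_support_subset i hv k hu) huA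
  disjointCond k l hkl u hu hul :=
    P.disjointCond k l hkl u (P.truncTooth_support_subset i hv k hu)
      (P.truncTooth_support_subset i hv l hul)
  lastMem k := by
    refine segmentEnds.anti ?_ (Or.inl (Tooth.mem_support.mpr ⟨k, Walk.end_mem_support _⟩))
      (Set.union_subset_union_left A (P.support_truncTooth_subset i hv))
    by_cases hk : k = i
    · subst hk
      rw [truncTooth, Function.update_self]
      exact hvE
    · rw [truncTooth, Function.update_of_ne hk]
      exact P.lastMem k

lemma offACard_truncate_lt (hvE : v ∈ P.ends) (hvlast : v ≠ (P.tooth i).last) :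
    (P.truncate i hv hvE).offACard < P.offACard := by
  set b := (P.tooth i).last
  have hbA : b ∉ A := fun hbA => by
    have hba := P.onlyFirstInA i b (Walk.end_mem_support _) hbA
    have hnil := Walk.nil_iff_support_eq.mp (((P.isPath i).nil_iff_eq).mpr hba.symm)
    exact hvlast ((List.mem_singleton.mp (hnil ▸ hv)).trans hba.symm)
  have hb_trunc : b ∉ Tooth.support (P.truncTooth i hv) := by
    rw [Tooth.mem_support]
    rintro ⟨k, hk⟩
    by_cases hki : k = i
    · subst hki
      rw [truncTooth, Function.update_self] at hk
      exact Walk.endpoint_notMem_support_takeUntil (P.isPath k) hv hvlast.symm hk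
    · exact P.disjointCond i k (Ne.symm hki) b (Walk.end_mem_support _)
        (P.truncTooth_support_subset i hv k hk)
  refine Set.ncard_lt_ncard ?_ ((Set.finite_iUnion fun k => List.finite_toSet _).sdiff)
  have hb_old : b ∈ Tooth.support P.tooth \ A :=
    ⟨Tooth.mem_support.mpr ⟨i, Walk.end_mem_support _⟩, hbA⟩
  exact (Set.ssubset_iff_of_subset (Set.sdiff_subset_sdiff_left
    (P.support_truncTooth_subset i hv))).mpr ⟨b, hb_old, fun h => hb_trunc h.1⟩

end truncate

def consTooth (v : V) : Fin (m + 1) → Tooth G := Fin.cons ⟨v, v, Walk.nil⟩ P.tooth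

section cons

variable {v : V}

lemma support_consTooth : Tooth.support (P.consTooth v) = insert v (Tooth.support P.tooth) := by
  ext u
  simp only [Tooth.mem_support, Fin.exists_fin_succ, Set.mem_insert_iff]
  exact or_congr_left List.mem_singleton

lemma support_consTooth_union (hvA : v ∈ A) :
    Tooth.support (P.consTooth v) ∪ A = Tooth.support P.tooth ∪ A := by
  rw [P.support_consTooth, Set.insert_union, Set.insert_eq_of_mem (Set.mem_union_right _ hvA)]

def cons (hvA : v ∈ A) (hvP : v ∉ Tooth.support P.tooth) (hvE : v ∈ P.ends) :
    PreComb A L (m + 1) where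
  tooth := P.consTooth v
  isPath := Fin.cases Walk.IsPath.nil P.isPath
  firstMem := Fin.cases hvA P.firstMem
  onlyFirstInA := Fin.cases (fun u hu _ => List.mem_singleton.mp hu) P.onlyFirstInA
  disjointCond k l hkl u hu hul := by
    induction k using Fin.cases <;> induction l using Fin.cases
    · exact hkl rfl
    · exact hvP (Tooth.mem_support.mpr ⟨_, List.mem_singleton.mp hu ▸ hul⟩)
    · exact hvP (Tooth.mem_support.mpr ⟨_, List.mem_singleton.mp hul ▸ hu⟩)
    · exact P.disjointCond _ _ (fun h => hkl (congrArg _ h)) u hu hul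
  lastMem := by
    rw [P.support_consTooth_union hvA]
    exact Fin.cases hvE P.lastMem

lemma offACard_cons (hvA : v ∈ A) (hvP : v ∉ Tooth.support P.tooth) (hvE : v ∈ P.ends) :
    (P.cons hvA hvP hvE).offACard = P.offACard := by
  simp only [offACard, cons, support_consTooth, Set.insert_sdiff_of_mem _ hvA]

lemma unmatchedCard_cons_lt (hvA : v ∈ A) (hvP : v ∉ Tooth.support P.tooth) (hvE : v ∈ P.ends)
    (hvlast : v ∉ P.lasts) :
    (P.cons hvA hvP hvE).unmatchedCard < P.unmatchedCard := by
  have hends : (P.cons hvA hvP hvE).ends = P.ends :=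
    congrArg (segmentEnds L) (P.support_consTooth_union hvA)
  have hlasts : (P.cons hvA hvP hvE).lasts = insert v P.lasts := by
    rw [lasts, lasts, ← Fin.range_cons]
    congr 1
    funext k
    induction k using Fin.cases <;> rfl
  rw [unmatchedCard, unmatchedCard, hends, hlasts]
  refine Set.ncard_lt_ncard ⟨fun u hu => ⟨hu.1, fun h => hu.2 (Or.inr h)⟩, fun h => ?_⟩
    (segmentEnds.finite L _).sdiff
  exact (h ⟨hvE, hvlast⟩).2 (Set.mem_insert v _)

end cons

theorem exists_comb [DecidableEq V] {m : ℕ} (P : PreComb A L m) :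
    ∃ m', m ≤ m' ∧ Nonempty (Comb A L m') := by
  by_cases hdone : P.ends ⊆ P.lasts
  · exact ⟨m, le_rfl, ⟨P.toComb hdone⟩⟩
  obtain ⟨v, hvE, hvlast⟩ := Set.not_subset.mp hdone
  by_cases hvP : v ∈ Tooth.support P.tooth
  · obtain ⟨i, hvi⟩ := Tooth.mem_support.mp hvP
    exact (P.truncate i hvi hvE).exists_comb
  · have hvA : v ∈ A := (segmentEnds.mem_set hvE).resolve_left hvP
    obtain ⟨m', hm', hcomb⟩ := (P.cons hvA hvP hvE).exists_comb
    exact ⟨m', by omega, hcomb⟩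
termination_by (P.offACard, P.unmatchedCard)
decreasing_by
  · exact Prod.Lex.left _ _ (P.offACard_truncate_lt i hvi hvE fun h => hvlast ⟨i, h.symm⟩)
  · rw [P.offACard_cons hvA hvP hvE]
    exact Prod.Lex.right _ (P.unmatchedCard_cons_lt hvA hvP hvE hvlast)

end PreComb

end CombConstruction

/-- If `G` contains `t` disjoint `H`–`(X ∪ Y)` paths (with `A` the vertex set of the
subgraph `H`) and `L` is an `X`–`Y` linkage, then `G` contains an `H`–`L` comb of at least `t`
paths. -/
theorem stmt6 {V : Type} {G : SimpleGraph V} {X Y : Set V} {t' : ℕ}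
    (L : Linkage G X Y t') (A : Set V) (t : ℕ)
    (hpaths : ∃ (e₁ e₂ : Fin t → V) (w : ∀ i, G.Walk (e₁ i) (e₂ i)),
      (∀ i, (w i).IsPath) ∧ (∀ i, e₁ i ∈ A) ∧ (∀ i, e₂ i ∈ X ∪ Y) ∧
      (∀ i v, v ∈ (w i).support → v ∈ A → v = e₁ i) ∧
      (∀ i v, v ∈ (w i).support → v ∈ X ∪ Y → v = e₂ i) ∧
      (∀ i j, i ≠ j → ∀ v, v ∈ (w i).support → v ∉ (w j).support)) :
    ∃ m : ℕ, t ≤ m ∧ Nonempty (Comb A L m) := by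
  classical
  obtain ⟨e₁, e₂, w, hpath, he₁, he₂, honlyA, -, hdisj⟩ := hpaths
  let P : PreComb A L t :=
    { tooth i := ⟨e₁ i, e₂ i, w i⟩
      isPath := hpath
      firstMem := he₁
      onlyFirstInA := honlyA
      disjointCond := hdisj
      lastMem i := segmentEnds.of_mem_union (he₂ i)
        (Or.inl (Tooth.mem_support.mpr ⟨i, (w i).end_mem_support⟩)) }
  exact P.exists_comb
end

section
/- If a bipartite graph K_{m,T} with m = k(p-2) + cp and T arbitrary large, and k >= cp + 1, then K_{m,T} does not contain k pairwise disjoint instances of K_p as minors, yet K_{m,T} is (k(p-2)+cp)-connected when T >= m and has tree-width at most k(p-2)+cp. -/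
open SimpleGraph

/-! Every edge of `K_{m,T}` meets the `m`-side `A`, so at most one branch set of a `K_p` minor
avoids `A` and each `K_p` minor uses at least `p - 1` vertices of `A`; `k` disjoint ones would need
`k (p - 1) = k (p - 2) + k > m` of them. Deleting fewer than `m ≤ T` vertices leaves a vertex on
each side, hence a connected complete bipartite graph. The star whose centre bag is `A` and whose
leaf bags are `A ∪ {v}` is a tree decomposition with bags of size at most `m + 1`. -/

lemma Set.exists_apply_notMem_of_ncard_lt {α β : Type*} {f : α → β} (hf : Function.Injective f)
    {S : Set β} (hS : S.Finite) (hcard : S.ncard < Nat.card α) : ∃ a, f a ∉ S := by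
  by_contra! h
  have := Set.ncard_le_ncard (Set.range_subset_iff.mpr h) hS
  rw [Set.ncard_range_of_injective hf] at this
  omega

namespace SimpleGraph

variable {V : Type*} {G : SimpleGraph V} {A : Set V} {p k : ℕ}

lemma HasCliqueMinor.le_encard_of_isIndepSet_compl (h : HasCliqueMinor G p)
    (hA : G.IsIndepSet Aᶜ) : ((p - 1 : ℕ) : ℕ∞) ≤ A.encard := by
  obtain ⟨B, -, -, hdisj, hadj⟩ := h
  set I : Set (Fin p) := {i | (B i ∩ A).Nonempty}
  have hIc : Iᶜ.Subsingleton := by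
    intro i hi j hj
    by_contra hij
    obtain ⟨u, hu, v, hv, huv⟩ := hadj hij
    have hu' : u ∉ A := fun h => hi ⟨u, hu, h⟩
    have hv' : v ∉ A := fun h => hj ⟨v, hv, h⟩
    exact hA hu' hv' huv.ne huv
  have hI : ((p - 1 : ℕ) : ℕ∞) ≤ I.encard := by
    have hsum := Set.encard_add_encard_compl I
    rw [Set.encard_univ, ENat.card_eq_coe_fintype_card, Fintype.card_fin] at hsum
    rw [ENat.natCast_sub, Nat.cast_one, tsub_le_iff_right, ← hsum]
    exact add_le_add_right (Set.encard_le_one_iff_subsingleton.mpr hIc) _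
  choose f hf using fun i : I => i.2
  calc ((p - 1 : ℕ) : ℕ∞) ≤ I.encard := hI
    _ = (Set.univ : Set I).encard := by simp
    _ ≤ A.encard := Set.encard_le_encard_of_injOn (f := f) (fun i _ => (hf i).2)
        fun i _ j _ hij => Subtype.ext <| by_contra fun hne =>
          Set.disjoint_left.mp (hdisj hne) (hf i).1 (hij ▸ (hf j).1)

lemma HasDisjointCliqueMinors.le_encard_of_isIndepSet_compl (h : HasDisjointCliqueMinors G p k)
    (hA : G.IsIndepSet Aᶜ) : ((k * (p - 1) : ℕ) : ℕ∞) ≤ A.encard := by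
  obtain ⟨S, hdisj, hminor⟩ := h
  have hpart : ∀ i, ((p - 1 : ℕ) : ℕ∞) ≤ (S i ∩ A).encard := fun i => by
    have hAi : (G.induce (S i)).IsIndepSet (Subtype.val ⁻¹' A)ᶜ :=
      fun u hu v hv huv => hA hu hv (Subtype.val_injective.ne huv)
    have hval : Subtype.val '' (Subtype.val ⁻¹' A : Set (S i)) = S i ∩ A := by simp
    rw [← hval, Subtype.val_injective.encard_image]
    exact (hminor i).le_encard_of_isIndepSet_compl hAi
  calc ((k * (p - 1) : ℕ) : ℕ∞) = ∑ _i : Fin k, ((p - 1 : ℕ) : ℕ∞) := by simp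
    _ ≤ ∑ i, (S i ∩ A).encard := Finset.sum_le_sum fun i _ => hpart i
    _ = (⋃ i, S i ∩ A).encard := by
        rw [Set.encard_iUnion_of_finite fun i j hij =>
          (hdisj hij).mono Set.inter_subset_left Set.inter_subset_left, finsum_eq_sum_of_fintype]
    _ ≤ A.encard := Set.encard_le_encard (Set.iUnion_subset fun _ => Set.inter_subset_right)

lemma connected_induce_completeBipartiteGraph {α β : Type*} {s : Set (α ⊕ β)} {a : α} {b : β}
    (ha : .inl a ∈ s) (hb : .inr b ∈ s) : ((completeBipartiteGraph α β).induce s).Connected := by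
  refine connected_iff_exists_forall_reachable _ |>.mpr ⟨⟨.inr b, hb⟩, ?_⟩
  rintro ⟨_ | y, hw⟩
  · exact Adj.reachable (by simp)
  · exact (Adj.reachable (v := ⟨.inl a, ha⟩) (by simp)).trans (Adj.reachable (by simp))

lemma isIndepSet_compl_range_inl {α β : Type*} :
    (completeBipartiteGraph α β).IsIndepSet (Set.range Sum.inl)ᶜ := by
  rintro (a | b) hu (a' | b') hv - <;> simp_all

theorem isKConnected_completeBipartiteGraph {α β : Type*} [Fintype α] [Fintype β]
    (hα : 0 < Fintype.card α) (hαβ : Fintype.card α ≤ Fintype.card β) :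
    IsKConnected (completeBipartiteGraph α β) (Fintype.card α) := by
  refine ⟨by simp only [Nat.card_eq_fintype_card, Fintype.card_sum]; omega, fun S hS hcard => ?_⟩
  simp only [← Nat.card_eq_fintype_card] at hcard hαβ
  obtain ⟨a, ha⟩ := Set.exists_apply_notMem_of_ncard_lt Sum.inl_injective hS hcard
  obtain ⟨b, hb⟩ := Set.exists_apply_notMem_of_ncard_lt Sum.inr_injective hS (hcard.trans_le hαβ)
  exact connected_induce_completeBipartiteGraph (s := Sᶜ) ha hb

def starBags (A : Set V) : Option V → Set V
  | none => A
  | some v => insert v A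

lemma isTreeDecomp_starBags (hA : G.IsIndepSet Aᶜ) :
    IsTreeDecomp G (starGraph none) (starBags A) := by
  refine ⟨isTree_starGraph none, fun v => ⟨some v, Set.mem_insert v A⟩, fun u v huv => ?_,
    fun v => ?_⟩
  · by_cases hu : u ∈ A
    · exact ⟨some v, Set.mem_insert_of_mem v hu, Set.mem_insert v A⟩
    · have hv : v ∈ A := by_contra fun hv => hA hu hv huv.ne huv
      exact ⟨some u, Set.mem_insert u A, Set.mem_insert_of_mem u hv⟩
  · by_cases hv : v ∈ A
    · refine Connected.of_isUniversal (v := ⟨none, hv⟩) fun w hw => ?_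
      simpa [Subtype.ext_iff] using hw
    · refine Connected.of_isUniversal (v := ⟨some v, Set.mem_insert v A⟩) fun w hw => ?_
      obtain ⟨_ | u, hu⟩ := w
      · exact absurd hu hv
      · obtain rfl : v = u := by simpa [starBags, hv] using hu
        exact absurd rfl hw

theorem treewidthLt_of_isIndepSet_compl {V : Type} {G : SimpleGraph V} {A : Set V}
    (hfin : A.Finite) (hA : G.IsIndepSet Aᶜ) : TreewidthLt G (A.ncard + 1) := by
  refine ⟨Option V, starGraph none, starBags A, isTreeDecomp_starBags hA, ?_⟩
  rintro (_ | v)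
  · exact ⟨hfin, A.ncard.le_succ⟩
  · exact ⟨hfin.insert v, Set.ncard_insert_le v A⟩

end SimpleGraph

/-- For `m = k(p-2) + cp` and `k ≥ cp + 1`, the complete bipartite graph `K_{m,T}`
contains no `k` disjoint `K_p` minors, is `m`-connected when `T ≥ m`, and has tree-width at most
`m`. -/
theorem stmt19 (p k c : ℕ) (hp : 3 ≤ p) (hk : c * p + 1 ≤ k) (T : ℕ) :
    ¬ HasDisjointCliqueMinors
        (completeBipartiteGraph (Fin (k * (p - 2) + c * p)) (Fin T)) p k ∧
    (k * (p - 2) + c * p ≤ T →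
      IsKConnected (completeBipartiteGraph (Fin (k * (p - 2) + c * p)) (Fin T))
        (k * (p - 2) + c * p)) ∧
    TreewidthLt (completeBipartiteGraph (Fin (k * (p - 2) + c * p)) (Fin T))
      (k * (p - 2) + c * p + 1) := by
  set m := k * (p - 2) + c * p
  have hm : 0 < m := by
    have : k ≤ k * (p - 2) := Nat.le_mul_of_pos_right k (by omega)
    omega
  have hcard : (Set.range (Sum.inl : Fin m → Fin m ⊕ Fin T)).ncard = m := by
    simp [Set.ncard_range_of_injective Sum.inl_injective]
  refine ⟨fun h => ?_, fun hT => ?_, ?_⟩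
  · have hle := h.le_encard_of_isIndepSet_compl isIndepSet_compl_range_inl
    rw [← (Set.finite_range _).cast_ncard_eq, hcard, Nat.cast_le] at hle
    have : k * (p - 1) = k * (p - 2) + k := by rw [show p - 1 = p - 2 + 1 by omega, mul_add_one]
    omega
  · simpa using isKConnected_completeBipartiteGraph (α := Fin m) (β := Fin T) (by simpa) (by simpa)
  · simpa [hcard] using treewidthLt_of_isIndepSet_compl
      (Set.finite_range (Sum.inl : Fin m → Fin m ⊕ Fin T)) isIndepSet_compl_range_inl
end
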